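/- For B ∈ SU(2), let ι(B) ∈ SU(4) denote the block-diagonal matrix diag(I₂, B) (upper-left 2×2 block the identity, lower-right 2×2 block B, off-diagonal blocks zero). Then d(ι(B)) ≥ 1 if and only if B = −I₂, and in that case d(ι(−I₂)) = 1. In other words, the intersection of the closure of Y₁ with the image of ι equals the single matrix diag(1,1,−1,−1), and this matrix lies in Y₁. -/

import Mathlib

/-- The intersection of the `(-1)`-eigenspace of a `4 × 4` complex matrix `A` with the span
of the first three standard basis vectors: `{x ∈ ℂ⁴ : A·x = -x and x₃ = 0}`. -/
noncomputable def Espace (A : Matrix (Fin 4) (Fin 4) ℂ) : Submodule ℂ (Fin 4 → ℂ) :=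
  LinearMap.ker (A.mulVecLin + LinearMap.id) ⊓
    LinearMap.ker (LinearMap.proj (R := ℂ) (φ := fun _ : Fin 4 => ℂ) (3 : Fin 4))

/-- `d(A) = dim_ℂ E(A)`. -/
noncomputable def eigDim (A : Matrix (Fin 4) (Fin 4) ℂ) : ℕ :=
  Module.finrank ℂ (Espace A)

/-- The block-diagonal embedding `ι : SU(2) → SU(4)`, `ι(B) = diag(I₂, B)`. -/
noncomputable def iotaMat (B : Matrix (Fin 2) (Fin 2) ℂ) : Matrix (Fin 4) (Fin 4) ℂ :=
  Matrix.reindex finSumFinEquiv finSumFinEquiv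
    (Matrix.fromBlocks (1 : Matrix (Fin 2) (Fin 2) ℂ) 0 0 B)

/-! A vector with `ι(B)·x = -x` and `x₃ = 0` also has `x₀ = x₁ = 0` (the `I₂` block), so it is a
multiple of `e₂`, and `e₂` qualifies exactly when the first column of `B` is `-e₀`. Hence
`d(ι(B))` is `1` or `0` according to that condition. For `B ∈ SU(2)` with first column `-e₀`,
orthogonality of the columns kills `B₀₁`, and `det B = 1` then forces `B₁₁ = -1`. -/

open Matrix

theorem Matrix.eq_neg_one_of_mem_specialUnitaryGroup_fin_two {R : Type*} [CommRing R] [StarRing R]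
    {B : Matrix (Fin 2) (Fin 2) R} (hB : B ∈ specialUnitaryGroup (Fin 2) R)
    (h00 : B 0 0 = -1) (h10 : B 1 0 = 0) : B = -1 := by
  obtain ⟨hu, hdet⟩ := mem_specialUnitaryGroup_iff.mp hB
  have h01 : B 0 1 = 0 := by
    simpa [mul_apply, Fin.sum_univ_two, h00, h10] using
      congr_fun₂ (mem_unitaryGroup_iff'.mp hu) 0 1
  have h11 : B 1 1 = -1 := by
    rw [det_fin_two, h00, h01, h10] at hdet
    linear_combination -hdet
  ext i j
  fin_cases i <;> fin_cases j <;> simp [h00, h01, h10, h11]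

theorem iotaMat_eq (B : Matrix (Fin 2) (Fin 2) ℂ) :
    iotaMat B = !![1, 0, 0, 0; 0, 1, 0, 0; 0, 0, B 0 0, B 0 1; 0, 0, B 1 0, B 1 1] := by
  ext i j
  fin_cases i <;> fin_cases j <;> rfl

theorem mem_Espace_iff (A : Matrix (Fin 4) (Fin 4) ℂ) (x : Fin 4 → ℂ) :
    x ∈ Espace A ↔ A *ᵥ x = -x ∧ x 3 = 0 := by
  simp [Espace, add_eq_zero_iff_eq_neg]

theorem mem_Espace_iotaMat_iff (B : Matrix (Fin 2) (Fin 2) ℂ) (x : Fin 4 → ℂ) :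
    x ∈ Espace (iotaMat B) ↔
      x 0 = 0 ∧ x 1 = 0 ∧ x 3 = 0 ∧ (B 0 0 + 1) * x 2 = 0 ∧ B 1 0 * x 2 = 0 := by
  rw [mem_Espace_iff, iotaMat_eq, funext_iff]
  simp only [Fin.isValue, cons_mulVec, cons_dotProduct, vecHead, one_mul, vecTail,
    Nat.succ_eq_add_one, Nat.reduceAdd, Function.comp_apply, Fin.succ_zero_eq_one, zero_mul,
    Fin.succ_one_eq_two, Fin.reduceSucc, dotProduct_of_isEmpty, add_zero, zero_add, empty_mulVec,
    Pi.neg_apply, eq_neg_iff_add_eq_zero, Fin.forall_fin_succ, cons_val_zero, add_self_eq_zero,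
    cons_val_succ, cons_val_fin_one, IsEmpty.forall_iff, and_true]
  grind

theorem Espace_iotaMat (B : Matrix (Fin 2) (Fin 2) ℂ) :
    Espace (iotaMat B) = if B 0 0 = -1 ∧ B 1 0 = 0 then ℂ ∙ Pi.single 2 1 else ⊥ := by
  split_ifs with hB
  · ext x
    rw [mem_Espace_iotaMat_iff, Submodule.mem_span_singleton, hB.1, hB.2]
    constructor
    · rintro ⟨h0, h1, h3, -, -⟩
      exact ⟨x 2, by ext i; fin_cases i <;> simp [h0, h1, h3]⟩
    · rintro ⟨a, rfl⟩
      simp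
  · refine eq_bot_iff.mpr fun x hx => ?_
    obtain ⟨h0, h1, h3, h2, h2'⟩ := (mem_Espace_iotaMat_iff B x).mp hx
    have hx2 : x 2 = 0 := by
      by_contra hx2
      exact hB ⟨eq_neg_of_add_eq_zero_left ((mul_eq_zero_iff_right hx2).mp h2),
        (mul_eq_zero_iff_right hx2).mp h2'⟩
    ext i
    fin_cases i <;> assumption

theorem eigDim_iotaMat (B : Matrix (Fin 2) (Fin 2) ℂ) :
    eigDim (iotaMat B) = if B 0 0 = -1 ∧ B 1 0 = 0 then 1 else 0 := by
  rw [eigDim, Espace_iotaMat]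
  by_cases hcol : B 0 0 = -1 ∧ B 1 0 = 0
  · rw [if_pos hcol, if_pos hcol]
    exact finrank_span_singleton (Pi.single_ne_zero_iff.mpr one_ne_zero)
  · rw [if_neg hcol, if_neg hcol, finrank_bot]

/-- For `B ∈ SU(2)`, `d(ι(B)) ≥ 1` iff `B = -I₂`, and `d(ι(-I₂)) = 1`; i.e. the closure of
`Y₁` meets the image of `ι` exactly in `diag(1,1,-1,-1)`, which lies in `Y₁`. -/
theorem closure_Y1_inter_iota :
    (∀ B : Matrix (Fin 2) (Fin 2) ℂ, B ∈ Matrix.specialUnitaryGroup (Fin 2) ℂ →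
      (1 ≤ eigDim (iotaMat B) ↔ B = -(1 : Matrix (Fin 2) (Fin 2) ℂ))) ∧
    eigDim (iotaMat (-(1 : Matrix (Fin 2) (Fin 2) ℂ))) = 1 := by
  refine ⟨fun B hB => ?_, by simp [eigDim_iotaMat]⟩
  rw [eigDim_iotaMat]
  split_ifs with hcol
  · exact iff_of_true le_rfl (eq_neg_one_of_mem_specialUnitaryGroup_fin_two hB hcol.1 hcol.2)
  · refine iff_of_false (by norm_num) ?_
    rintro rfl
    exact hcol (by simp)
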